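/- Let q ∈ S_n with coordinates η_q and θ_q. Then the Hessian of the loss L_q in η coordinates evaluated at the optimum η_q equals ∇²φ(η_q), the Hessian of L_q in θ coordinates evaluated at θ_q equals ∇²ψ(θ_q), these two matrices are inverse to each other, and ∇²L_q(η_q) − I is positive definite; equivalently, I − ∇²L_q(θ_q) is positive definite. -/

import Mathlib

open Filter

noncomputable section

abbrev E (n : ℕ) := EuclideanSpace ℝ (Fin n)

/-- The open probability simplex `S_n` inside `ℝ^{n+1}`. -/
def simplex (n : ℕ) : Set (Fin (n+1) → ℝ) :=
  {p | (∀ i, 0 < p i) ∧ ∑ i, p i = 1}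

/-- The mixture (`η`) coordinate domain `Δ_n`. -/
def Δset (n : ℕ) : Set (E n) := {η | (∀ i, 0 < η i) ∧ ∑ i, η i < 1}

/-- The distribution in `S_n` corresponding to `η` coordinates. -/
def mixDist {n : ℕ} (η : E n) : Fin (n+1) → ℝ :=
  Fin.snoc (fun i => η i) (1 - ∑ i, η i)

/-- The distribution in `S_n` corresponding to `θ` coordinates. -/
def expDist {n : ℕ} (θ : E n) : Fin (n+1) → ℝ :=
  Fin.snoc (fun i => Real.exp (θ i) / (1 + ∑ j, Real.exp (θ j)))
    (1 / (1 + ∑ j, Real.exp (θ j)))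

/-- The `η` coordinates of a distribution `q ∈ S_n`. -/
def etaCoord {n : ℕ} (q : Fin (n+1) → ℝ) : E n := WithLp.toLp 2 (fun i => q i.castSucc)

/-- The `θ` coordinates of a distribution `q ∈ S_n`. -/
def thetaCoord {n : ℕ} (q : Fin (n+1) → ℝ) : E n :=
  WithLp.toLp 2 (fun i => Real.log (q i.castSucc / q (Fin.last n)))

/-- Kullback–Leibler divergence `D(q‖p)`. -/
def KL {n : ℕ} (q p : Fin (n+1) → ℝ) : ℝ := ∑ i, q i * Real.log (q i / p i)

/-- Log-partition function `ψ(θ) = log(1 + Σ e^{θ_i})`. -/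
def psi {n : ℕ} (θ : E n) : ℝ := Real.log (1 + ∑ i, Real.exp (θ i))

/-- Negative entropy `φ(η)`. -/
def phi {n : ℕ} (η : E n) : ℝ :=
  (∑ i, η i * Real.log (η i)) + (1 - ∑ i, η i) * Real.log (1 - ∑ i, η i)

/-- The loss `L_q` in `η` coordinates: `η ↦ D(q ‖ p(η))`. -/
def Leta {n : ℕ} (q : Fin (n+1) → ℝ) (η : E n) : ℝ := KL q (mixDist η)

/-- The loss `L_q` in `θ` coordinates: `θ ↦ D(q ‖ p(θ))`. -/
def Ltheta {n : ℕ} (q : Fin (n+1) → ℝ) (θ : E n) : ℝ := KL q (expDist θ)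

/-- The Hessian of `f : ℝⁿ → ℝ` at `x`, as the `n × n` matrix of second partial
derivatives. -/
def hess {n : ℕ} (f : E n → ℝ) (x : E n) : Matrix (Fin n) (Fin n) ℝ :=
  Matrix.of fun i j =>
    fderiv ℝ (fun y => fderiv ℝ f y (EuclideanSpace.single j 1)) x (EuclideanSpace.single i 1)

/-- The set of (real) eigenvalues of a matrix. -/
def lamSet {n : ℕ} (A : Matrix (Fin n) (Fin n) ℝ) : Set ℝ :=
  {μ | ∃ v : Fin n → ℝ, v ≠ 0 ∧ A.mulVec v = μ • v}

/-- Largest eigenvalue `λ_max`. -/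
def lamMax {n : ℕ} (A : Matrix (Fin n) (Fin n) ℝ) : ℝ := sSup (lamSet A)

/-- Smallest eigenvalue `λ_min`. -/
def lamMin {n : ℕ} (A : Matrix (Fin n) (Fin n) ℝ) : ℝ := sInf (lamSet A)

/-- Condition number `cond(A) = λ_max(A)/λ_min(A)`. -/
def condNum {n : ℕ} (A : Matrix (Fin n) (Fin n) ℝ) : ℝ := lamMax A / lamMin A

/-- Operator 2-norm of a matrix (induced by the Euclidean norm). -/
def opNorm {n : ℕ} (A : Matrix (Fin n) (Fin n) ℝ) : ℝ :=
  ‖Matrix.toEuclideanCLM (𝕜 := ℝ) A‖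


/-! In `η` coordinates both `L_q` and `φ` have the form
`y ↦ ∑ₖ aₖ(yₖ) + b(1 - ∑ₖ yₖ)`, whose Hessian is diagonal plus a constant matrix, and at `η_q`
both equal `diag(1/qₖ) + (1/q_{n+1}) 𝟙𝟙ᵀ`. In `θ` coordinates `L_q` differs from `ψ` by an affine
function, and `∇²ψ(θ_q) = diag(qₖ) - q qᵀ`. The product of the two is `I` because
`∑ₖ qₖ = 1 - q_{n+1}`, and since every `qₖ < 1`, subtracting `I` from the first (or the second
from `I`) leaves a positive diagonal plus a positive semidefinite rank-one matrix. -/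

open Topology

section HessianCalculus

variable {n : ℕ}

lemma hess_apply_of_eventually_fderiv_eq {f : E n → ℝ} {x : E n} {g : Fin n → E n → ℝ}
    {g' : Fin n → E n →L[ℝ] ℝ}
    (hf : ∀ᶠ y in 𝓝 x, ∀ j, fderiv ℝ f y (EuclideanSpace.single j 1) = g j y)
    (hg : ∀ j, HasFDerivAt (g j) (g' j) x) (i j : Fin n) :
    hess f x i j = g' j (EuclideanSpace.single i 1) := by
  have hfj : (fun y => fderiv ℝ f y (EuclideanSpace.single j 1)) =ᶠ[𝓝 x] g j :=
    hf.mono fun y hy => hy j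
  rw [hess, Matrix.of_apply, hfj.fderiv_eq, (hg j).fderiv]

theorem hess_add_clm_add_const {g : E n → ℝ} (hg : Differentiable ℝ g) (ℓ : E n →L[ℝ] ℝ) (c : ℝ)
    (x : E n) : hess (fun y => g y + ℓ y + c) x = hess g x := by
  have hderiv (y : E n) : fderiv ℝ (fun y => g y + ℓ y + c) y = fderiv ℝ g y + ℓ :=
    (((hg y).hasFDerivAt.add ℓ.hasFDerivAt).add_const c).fderiv
  ext i j
  simp only [hess, Matrix.of_apply, hderiv, add_apply]
  rw [fderiv_add_const]

lemma hasFDerivAt_comp_apply {g : ℝ → ℝ} {g' : ℝ} {x : E n} (k : Fin n)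
    (h : HasDerivAt g g' (x k)) :
    HasFDerivAt (fun y : E n => g (y k)) (g' • EuclideanSpace.proj (𝕜 := ℝ) k) x :=
  h.comp_hasFDerivAt (f := fun y : E n => y k) x
    ((EuclideanSpace.proj (𝕜 := ℝ) (ι := Fin n) k).hasFDerivAt (x := x))

lemma hasFDerivAt_comp_one_sub_sum {g : ℝ → ℝ} {g' : ℝ} {x : E n}
    (h : HasDerivAt g g' (1 - ∑ k, x k)) :
    HasFDerivAt (fun y : E n => g (1 - ∑ k, y k))
      ((-g') • ∑ k, EuclideanSpace.proj (𝕜 := ℝ) k) x := by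
  have hs : HasFDerivAt (fun y : E n => 1 - ∑ k, y k)
      (-∑ k, EuclideanSpace.proj (𝕜 := ℝ) k) x := by
    simpa using ((HasFDerivAt.fun_sum fun k _ =>
      (EuclideanSpace.proj (𝕜 := ℝ) (ι := Fin n) k).hasFDerivAt (x := x)).const_sub 1)
  rw [neg_smul, ← smul_neg]
  exact h.comp_hasFDerivAt x hs

theorem hess_sum_apply_add_one_sub_sum {a a' : Fin n → ℝ → ℝ} {a'' : Fin n → ℝ}
    {b b' : ℝ → ℝ} {b'' : ℝ} {x : E n}
    (ha : ∀ k, ∀ᶠ t in 𝓝 (x k), HasDerivAt (a k) (a' k t) t)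
    (ha' : ∀ k, HasDerivAt (a' k) (a'' k) (x k))
    (hb : ∀ᶠ s in 𝓝 (1 - ∑ k, x k), HasDerivAt b (b' s) s)
    (hb' : HasDerivAt b' b'' (1 - ∑ k, x k)) :
    hess (fun y => ∑ k, a k (y k) + b (1 - ∑ k, y k)) x
      = Matrix.diagonal a'' + Matrix.of fun _ _ => b'' := by
  have hnear : ∀ᶠ y in 𝓝 x, (∀ k, HasDerivAt (a k) (a' k (y k)) (y k)) ∧
      HasDerivAt b (b' (1 - ∑ k, y k)) (1 - ∑ k, y k) := by
    refine (eventually_all.2 fun k => ?_).and ?_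
    · exact ((show Continuous fun y : E n => y k by fun_prop).tendsto x).eventually (ha k)
    · exact ((show Continuous fun y : E n => 1 - ∑ k, y k by fun_prop).tendsto x).eventually hb
  have hgrad : ∀ᶠ y in 𝓝 x, ∀ j, fderiv ℝ (fun y => ∑ k, a k (y k) + b (1 - ∑ k, y k)) y
      (EuclideanSpace.single j 1) = a' j (y j) - b' (1 - ∑ k, y k) := by
    filter_upwards [hnear] with y ⟨hay, hby⟩ j
    rw [((HasFDerivAt.fun_sum fun k _ => hasFDerivAt_comp_apply k (hay k)).fun_add
      (hasFDerivAt_comp_one_sub_sum hby)).fderiv]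
    simp [sub_eq_add_neg]
  ext i j
  rw [hess_apply_of_eventually_fderiv_eq hgrad fun j =>
    (hasFDerivAt_comp_apply j (ha' j)).sub (hasFDerivAt_comp_one_sub_sum hb')]
  by_cases hij : i = j
  · subst hij; simp
  · simp [hij]

end HessianCalculus

namespace Matrix

variable {ι : Type*} [Fintype ι] [DecidableEq ι]

theorem diagonal_inv_add_const_mul_diagonal_sub_vecMulVec {K : Type*} [Field K] {c : ι → K}
    {L : K} (hc : ∀ i, c i ≠ 0) (hL : L ≠ 0) (hsum : ∑ i, c i + L = 1) :
    (diagonal (fun i => (c i)⁻¹) + of fun _ _ => L⁻¹) * (diagonal c - vecMulVec c c) = 1 := by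
  have hsum' : ∑ i, c i = 1 - L := by rw [← hsum]; ring
  ext i k
  rw [add_mul, mul_sub, mul_sub, diagonal_mul_diagonal]
  simp only [add_apply, sub_apply, diagonal_mul, mul_diagonal, of_apply, vecMulVec_apply]
  simp only [mul_apply, of_apply, vecMulVec_apply, ← Finset.mul_sum, ← Finset.sum_mul, hsum',
    diagonal_apply, one_apply]
  split_ifs <;> field_simp [hc i] <;> ring

theorem posDef_diagonal_add_vecMulVec_self {d : ι → ℝ} (hd : ∀ i, 0 < d i) (u : ι → ℝ) :
    (diagonal d + vecMulVec u u).PosDef :=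
  (PosDef.diagonal hd).add_posSemidef (by simpa using posSemidef_vecMulVec_self_star u)

theorem posDef_diagonal_add_of_const {d : ι → ℝ} (hd : ∀ i, 0 < d i) {b : ℝ} (hb : 0 ≤ b) :
    (diagonal d + of fun _ _ => b).PosDef := by
  convert posDef_diagonal_add_vecMulVec_self hd (fun _ => √b) using 2
  ext
  simp [vecMulVec_apply, Real.mul_self_sqrt hb]

end Matrix

section Simplex

variable {n : ℕ}

lemma hasDerivAt_mul_log_div (c : ℝ) {t : ℝ} (ht : t ≠ 0) :
    HasDerivAt (fun t => c * Real.log (c / t)) (-c / t) t := by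
  rcases eq_or_ne c 0 with rfl | hc
  · simpa using hasDerivAt_const t (0 : ℝ)
  have h := (((hasDerivAt_inv ht).const_mul c).log (mul_ne_zero hc (inv_ne_zero ht))).const_mul c
  simp only [← div_eq_mul_inv] at h
  exact h.congr_deriv (by field_simp)

lemma hasDerivAt_neg_div (c : ℝ) {t : ℝ} (ht : t ≠ 0) :
    HasDerivAt (fun t => -c / t) (c / t ^ 2) t := by
  have h := (hasDerivAt_inv ht).const_mul (-c)
  simp only [← div_eq_mul_inv, neg_mul_neg] at h
  exact h

lemma Leta_eq (q : Fin (n+1) → ℝ) :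
    Leta q = fun y => ∑ k, q k.castSucc * Real.log (q k.castSucc / y k)
      + q (Fin.last n) * Real.log (q (Fin.last n) / (1 - ∑ k, y k)) := by
  funext y
  simp [Leta, KL, mixDist, Fin.sum_univ_castSucc]

theorem hess_Leta (q : Fin (n+1) → ℝ) {x : E n} (hx : ∀ k, x k ≠ 0) (hx' : 1 - ∑ k, x k ≠ 0) :
    hess (Leta q) x = Matrix.diagonal (fun k => q k.castSucc / x k ^ 2)
      + Matrix.of fun _ _ => q (Fin.last n) / (1 - ∑ k, x k) ^ 2 := by
  rw [Leta_eq]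
  exact hess_sum_apply_add_one_sub_sum
    (fun k => (eventually_ne_nhds (hx k)).mono fun _ ht => hasDerivAt_mul_log_div _ ht)
    (fun k => hasDerivAt_neg_div _ (hx k))
    ((eventually_ne_nhds hx').mono fun _ ht => hasDerivAt_mul_log_div _ ht)
    (hasDerivAt_neg_div _ hx')

theorem hess_phi {x : E n} (hx : ∀ k, x k ≠ 0) (hx' : 1 - ∑ k, x k ≠ 0) :
    hess phi x = Matrix.diagonal (fun k => (x k)⁻¹) + Matrix.of fun _ _ => (1 - ∑ k, x k)⁻¹ :=
  hess_sum_apply_add_one_sub_sum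
    (fun k => (eventually_ne_nhds (hx k)).mono fun _ ht => Real.hasDerivAt_mul_log ht)
    (fun k => (Real.hasDerivAt_log (hx k)).add_const 1)
    ((eventually_ne_nhds hx').mono fun _ ht => Real.hasDerivAt_mul_log ht)
    ((Real.hasDerivAt_log hx').add_const 1)

def softmax (θ : E n) (j : Fin n) : ℝ := Real.exp (θ j) / (1 + ∑ k, Real.exp (θ k))

lemma one_add_sum_exp_pos (θ : E n) : 0 < 1 + ∑ k, Real.exp (θ k) := by positivity

lemma hasFDerivAt_one_add_sum_exp (θ : E n) :
    HasFDerivAt (fun y : E n => 1 + ∑ k, Real.exp (y k))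
      (∑ k, Real.exp (θ k) • EuclideanSpace.proj (𝕜 := ℝ) k) θ :=
  (HasFDerivAt.fun_sum fun k _ => hasFDerivAt_comp_apply k (Real.hasDerivAt_exp _)).const_add 1

lemma hasFDerivAt_psi (θ : E n) :
    HasFDerivAt psi ((1 + ∑ k, Real.exp (θ k))⁻¹ •
      ∑ k, Real.exp (θ k) • EuclideanSpace.proj (𝕜 := ℝ) k) θ :=
  (Real.hasDerivAt_log (one_add_sum_exp_pos θ).ne').comp_hasFDerivAt θ
    (hasFDerivAt_one_add_sum_exp θ)

lemma fderiv_psi_single (θ : E n) (j : Fin n) :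
    fderiv ℝ psi θ (EuclideanSpace.single j 1) = softmax θ j := by
  rw [(hasFDerivAt_psi θ).fderiv]
  simp [softmax, div_eq_inv_mul]

lemma hasFDerivAt_softmax (θ : E n) (j : Fin n) :
    HasFDerivAt (fun y => softmax y j)
      (softmax θ j • (EuclideanSpace.proj (𝕜 := ℝ) j
        - ∑ k, softmax θ k • EuclideanSpace.proj k)) θ := by
  have h := (hasFDerivAt_comp_apply j (Real.hasDerivAt_exp _)).mul
    ((hasDerivAt_inv (one_add_sum_exp_pos θ).ne').comp_hasFDerivAt θ
      (hasFDerivAt_one_add_sum_exp θ))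
  simp only [softmax, div_eq_mul_inv]
  refine h.congr_fderiv ?_
  ext v
  simp only [add_apply, smul_apply, sub_apply, FunLike.coe_sum, Finset.sum_apply,
    Function.comp_apply, smul_eq_mul, PiLp.proj_apply]
  generalize 1 + ∑ k, Real.exp (θ k) = Z
  have hsum : ∑ k, Real.exp (θ k) * Z⁻¹ * v k = Z⁻¹ * ∑ k, Real.exp (θ k) * v k := by
    rw [Finset.mul_sum]
    exact Finset.sum_congr rfl fun _ _ => by ring
  rw [hsum]
  ring

theorem hess_psi (θ : E n) :
    hess psi θ = Matrix.diagonal (softmax θ) - Matrix.vecMulVec (softmax θ) (softmax θ) := by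
  ext i j
  rw [hess_apply_of_eventually_fderiv_eq (.of_forall fun y => fderiv_psi_single y)
    (hasFDerivAt_softmax θ)]
  by_cases hij : i = j
  · subst hij; simp [Matrix.vecMulVec_apply]; ring
  · simp [hij, Matrix.vecMulVec_apply, mul_comm]

lemma Ltheta_eq {q : Fin (n+1) → ℝ} (hq : q ∈ simplex n) :
    Ltheta q = fun θ => psi θ + (-∑ k, q k.castSucc • EuclideanSpace.proj (𝕜 := ℝ) k) θ
      + ∑ i, q i * Real.log (q i) := by
  funext θ
  have hZ : 1 + ∑ k, Real.exp (θ k) ≠ 0 := (one_add_sum_exp_pos θ).ne'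
  have hcoord (k : Fin n) :
      Real.log (q k.castSucc / (Real.exp (θ k) / (1 + ∑ k, Real.exp (θ k))))
        = Real.log (q k.castSucc) - θ k + Real.log (1 + ∑ k, Real.exp (θ k)) := by
    rw [Real.log_div (hq.1 _).ne' (by positivity), Real.log_div (Real.exp_ne_zero _) hZ,
      Real.log_exp]
    ring
  have hlast : Real.log (q (Fin.last n) / (1 / (1 + ∑ k, Real.exp (θ k))))
      = Real.log (q (Fin.last n)) + Real.log (1 + ∑ k, Real.exp (θ k)) := by
    rw [one_div, div_inv_eq_mul, Real.log_mul (hq.1 _).ne' hZ]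
  have hsum := hq.2
  rw [Fin.sum_univ_castSucc] at hsum
  simp only [Ltheta, KL, expDist, psi, Fin.sum_univ_castSucc, Fin.snoc_castSucc, Fin.snoc_last,
    hcoord, hlast, mul_add, mul_sub, Finset.sum_add_distrib, Finset.sum_sub_distrib,
    ← Finset.sum_mul, neg_apply, FunLike.coe_sum, Finset.sum_apply, smul_apply, smul_eq_mul,
    PiLp.proj_apply]
  linear_combination Real.log (1 + ∑ k, Real.exp (θ k)) * hsum

theorem hess_Ltheta {q : Fin (n+1) → ℝ} (hq : q ∈ simplex n) (θ : E n) :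
    hess (Ltheta q) θ = hess psi θ := by
  rw [Ltheta_eq hq]
  exact hess_add_clm_add_const (fun y => (hasFDerivAt_psi y).differentiableAt) _ _ θ

variable {q : Fin (n+1) → ℝ}

lemma sum_castSucc_add_last (hq : q ∈ simplex n) :
    ∑ k : Fin n, q k.castSucc + q (Fin.last n) = 1 := by
  simpa [Fin.sum_univ_castSucc] using hq.2

lemma one_sub_sum_etaCoord (hq : q ∈ simplex n) : 1 - ∑ k, etaCoord q k = q (Fin.last n) := by
  simp only [etaCoord, PiLp.toLp_apply]
  linarith [sum_castSucc_add_last hq]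

theorem hess_Leta_etaCoord (hq : q ∈ simplex n) :
    hess (Leta q) (etaCoord q)
      = Matrix.diagonal (fun k => (q k.castSucc)⁻¹) + Matrix.of fun _ _ => (q (Fin.last n))⁻¹ := by
  have hx' := one_sub_sum_etaCoord hq
  rw [hess_Leta q (x := etaCoord q) (fun k => (hq.1 _).ne') (by rw [hx']; exact (hq.1 _).ne'), hx']
  simp [etaCoord, sq]

theorem hess_phi_etaCoord (hq : q ∈ simplex n) :
    hess phi (etaCoord q)
      = Matrix.diagonal (fun k => (q k.castSucc)⁻¹) + Matrix.of fun _ _ => (q (Fin.last n))⁻¹ := by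
  have hx' := one_sub_sum_etaCoord hq
  rw [hess_phi (x := etaCoord q) (fun k => (hq.1 _).ne') (by rw [hx']; exact (hq.1 _).ne'), hx']
  rfl

lemma softmax_thetaCoord (hq : q ∈ simplex n) : softmax (thetaCoord q) = fun k => q k.castSucc := by
  have hL := hq.1 (Fin.last n)
  have hexp (k : Fin n) : Real.exp (thetaCoord q k) = q k.castSucc / q (Fin.last n) :=
    Real.exp_log (div_pos (hq.1 _) hL)
  have hZ : 1 + ∑ k, Real.exp (thetaCoord q k) = (q (Fin.last n))⁻¹ := by
    simp only [hexp, ← Finset.sum_div]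
    field_simp
    linarith [sum_castSucc_add_last hq]
  funext k
  rw [softmax, hZ, hexp]
  field_simp

end Simplex

/-- Hessians of the loss at the optimum in both coordinates, their inverse
relationship and the local bounds. -/
theorem stmt_5 {n : ℕ} (q : Fin (n+1) → ℝ) (hq : q ∈ simplex n) :
    hess (Leta q) (etaCoord q) = hess phi (etaCoord q) ∧
    hess (Ltheta q) (thetaCoord q) = hess psi (thetaCoord q) ∧
    hess (Leta q) (etaCoord q) * hess (Ltheta q) (thetaCoord q) = 1 ∧
    (hess (Leta q) (etaCoord q) - (1 : Matrix (Fin n) (Fin n) ℝ)).PosDef ∧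
    ((1 : Matrix (Fin n) (Fin n) ℝ) - hess (Ltheta q) (thetaCoord q)).PosDef := by
  have hpos := hq.1
  have hlt (k : Fin n) : q k.castSucc < 1 := by
    have := Finset.single_le_sum (fun j _ => (hpos (Fin.castSucc j)).le) (Finset.mem_univ k)
    linarith [hpos (Fin.last n), sum_castSucc_add_last hq]
  have hA := hess_Leta_etaCoord hq
  have hB : hess (Ltheta q) (thetaCoord q) = Matrix.diagonal (fun k => q k.castSucc)
      - Matrix.vecMulVec (fun k => q k.castSucc) (fun k => q k.castSucc) := by
    rw [hess_Ltheta hq, hess_psi, softmax_thetaCoord hq]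
  refine ⟨hA.trans (hess_phi_etaCoord hq).symm, hess_Ltheta hq _, ?_, ?_, ?_⟩
  · rw [hA, hB]
    exact Matrix.diagonal_inv_add_const_mul_diagonal_sub_vecMulVec (fun _ => (hpos _).ne')
      (hpos _).ne' (sum_castSucc_add_last hq)
  · rw [hA, ← Matrix.diagonal_one, add_sub_right_comm, Matrix.diagonal_sub]
    exact Matrix.posDef_diagonal_add_of_const
      (fun k => sub_pos.2 ((one_lt_inv₀ (hpos _)).2 (hlt k))) (inv_nonneg.2 (hpos _).le)
  · rw [hB, ← Matrix.diagonal_one, sub_sub_eq_add_sub, add_sub_right_comm, Matrix.diagonal_sub]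
    exact Matrix.posDef_diagonal_add_vecMulVec_self (fun k => sub_pos.2 (hlt k)) _

end
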